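/- arXiv:1909.01977 — 6 statements merged into one kernel-verified Lean document; each statement's English description precedes it below -/
import Mathlib

section
/- Let A be an n×n real matrix that is strictly diagonally dominant with negative diagonal entries, decomposed as A = L + D + U where L is the strictly lower triangular part, D the diagonal, and U the strictly upper triangular part. Then for every Δt > 0, the matrix C = (I − Δt·L − Δt·D)^{-1}(I + Δt·U) has spectral radius strictly less than 1. -/
/-!
Write `M = I - Δt (L + D)` and `N = I + Δt U`, so `C = M⁻¹ N`. If `μ` is an eigenvalue of `C`
then `μ M - N` is singular. Its `(i, j)` entry is `[i = j] (μ - 1) - w Δt aᵢⱼ`, with weight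
`w = μ` on and below the diagonal and `w = 1` above it. For `|μ| ≥ 1` every off-diagonal entry
has modulus at most `|μ| Δt |aᵢⱼ|`, while `aᵢᵢ ≤ 0` gives
`|μ (1 - Δt aᵢᵢ) - 1| ≥ |μ| (1 + Δt |aᵢᵢ|) - 1 ≥ |μ| Δt |aᵢᵢ|`. So strict diagonal dominance of
`A` makes `μ M - N` strictly diagonally dominant, hence nonsingular (Lévy–Desplanques), a
contradiction.
-/

open Finset Matrix

namespace Matrix

variable {n : Type*} [Fintype n] [DecidableEq n]

theorem map_nonsing_inv {R S : Type*} [CommRing R] [CommRing S] (f : R →+* S)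
    {M : Matrix n n R} (hM : IsUnit M.det) : M⁻¹.map f = (M.map f)⁻¹ := by
  refine (inv_eq_left_inv ?_).symm
  rw [← Matrix.map_mul, nonsing_inv_mul M hM, Matrix.map_one _ f.map_zero f.map_one]

theorem det_smul_sub_eq_zero_of_mem_spectrum_inv_mul {K : Type*} [Field K] {M N : Matrix n n K}
    (hM : IsUnit M.det) {μ : K} (hμ : μ ∈ spectrum K (M⁻¹ * N)) : (μ • M - N).det = 0 := by
  have hfac : μ • M - N = M * (algebraMap K _ μ - M⁻¹ * N) := by
    rw [mul_sub, ← mul_assoc, mul_nonsing_inv M hM, one_mul, Algebra.algebraMap_eq_smul_one,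
      mul_smul_comm, mul_one]
  have hsing := (isUnit_iff_isUnit_det _).not.mp (spectrum.mem_iff.mp hμ)
  rw [hfac, det_mul, not_not.mp (isUnit_iff_ne_zero.not.mp hsing), mul_zero]

theorem det_smul_map_sub_map_eq_zero_of_mem_spectrum {R K : Type*} [CommRing R] [Field K]
    (f : R →+* K) {M N : Matrix n n R} (hM : IsUnit M.det) {μ : K}
    (hμ : μ ∈ spectrum K ((M⁻¹ * N).map f)) : (μ • M.map f - N.map f).det = 0 := by
  rw [Matrix.map_mul, map_nonsing_inv f hM] at hμ
  refine det_smul_sub_eq_zero_of_mem_spectrum_inv_mul ?_ hμ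
  simpa only [RingHom.map_det, RingHom.mapMatrix_apply] using hM.map f

end Matrix

section GaussSeidel

variable {n : Type*} [LinearOrder n]

noncomputable def gaussSeidelPencil (A : Matrix n n ℝ) (Δt : ℝ) (μ : ℂ) : Matrix n n ℂ :=
  Matrix.of fun i j => (if i = j then μ - 1 else 0) - (if j ≤ i then μ else 1) * (Δt * A i j)

theorem smul_map_sub_map_eq_gaussSeidelPencil {A L D U : Matrix n n ℝ}
    (hL : ∀ i j, L i j = if j < i then A i j else 0)
    (hD : ∀ i j, D i j = if j = i then A i j else 0)
    (hU : ∀ i j, U i j = if i < j then A i j else 0) (Δt : ℝ) (μ : ℂ) :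
    μ • (1 - Δt • L - Δt • D).map Complex.ofRealHom - (1 + Δt • U).map Complex.ofRealHom =
      gaussSeidelPencil A Δt μ := by
  ext i j
  rcases lt_trichotomy j i with h | rfl | h
  · simp [gaussSeidelPencil, hL, hD, hU, h, h.ne, h.ne', h.le, h.not_gt, one_apply_ne h.ne']
  · simp [gaussSeidelPencil, hL, hD, hU, mul_sub, sub_right_comm]
  · simp [gaussSeidelPencil, hL, hD, hU, h, h.ne, h.ne', h.not_ge, h.not_gt, one_apply_ne h.ne]

theorem isUnit_det_one_sub_smul_sub_smul [Fintype n] {A L D : Matrix n n ℝ}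
    (hdiag : ∀ i, A i i ≤ 0) (hL : ∀ i j, L i j = if j < i then A i j else 0)
    (hD : ∀ i j, D i j = if j = i then A i j else 0) {Δt : ℝ} (hΔt : 0 ≤ Δt) :
    IsUnit (1 - Δt • L - Δt • D).det := by
  have hlower : (1 - Δt • L - Δt • D).IsLowerTriangular := fun i j hij => by
    have hij : i < j := hij
    simp [hL, hD, hij.not_gt, hij.ne', one_apply_ne hij.ne]
  rw [det_of_isLowerTriangular _ hlower, isUnit_iff_ne_zero]
  refine prod_ne_zero_iff.mpr fun i _ => ne_of_gt ?_
  have hentry : (1 - Δt • L - Δt • D) i i = 1 - Δt * A i i := by simp [hL, hD]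
  rw [hentry]
  nlinarith [hdiag i]

theorem norm_gaussSeidelPencil_le {A : Matrix n n ℝ} {Δt : ℝ} (hΔt : 0 ≤ Δt) {μ : ℂ}
    (hμ : 1 ≤ ‖μ‖) {i j : n} (hij : i ≠ j) :
    ‖gaussSeidelPencil A Δt μ i j‖ ≤ Δt * ‖μ‖ * |A i j| := by
  have hweight : ‖if j ≤ i then μ else 1‖ ≤ ‖μ‖ := by
    split_ifs
    exacts [le_rfl, by simpa using hμ]
  calc ‖gaussSeidelPencil A Δt μ i j‖ = ‖if j ≤ i then μ else 1‖ * (Δt * |A i j|) := by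
        simp only [gaussSeidelPencil, of_apply, if_neg hij, zero_sub, norm_neg, norm_mul,
          Complex.norm_real, Real.norm_eq_abs, abs_of_nonneg hΔt]
    _ ≤ ‖μ‖ * (Δt * |A i j|) := by gcongr
    _ = Δt * ‖μ‖ * |A i j| := by ring

theorem le_norm_gaussSeidelPencil_diag {A : Matrix n n ℝ} {Δt : ℝ} (hΔt : 0 ≤ Δt) {μ : ℂ}
    (hμ : 1 ≤ ‖μ‖) {i : n} (hdiag : A i i ≤ 0) :
    Δt * ‖μ‖ * |A i i| ≤ ‖gaussSeidelPencil A Δt μ i i‖ := by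
  have hentry : gaussSeidelPencil A Δt μ i i = μ * ((1 - Δt * A i i : ℝ) : ℂ) - 1 := by
    simp only [gaussSeidelPencil, of_apply, if_pos le_rfl]
    push_cast
    ring
  calc Δt * ‖μ‖ * |A i i| ≤ ‖μ‖ * (1 - Δt * A i i) - 1 := by
        rw [abs_of_nonpos hdiag]
        nlinarith
    _ = ‖μ * ((1 - Δt * A i i : ℝ) : ℂ)‖ - ‖(1 : ℂ)‖ := by
        rw [norm_mul, Complex.norm_real, Real.norm_eq_abs, norm_one,
          abs_of_nonneg (by nlinarith)]
    _ ≤ ‖gaussSeidelPencil A Δt μ i i‖ := hentry ▸ norm_sub_norm_le _ _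

theorem det_gaussSeidelPencil_ne_zero [Fintype n] {A : Matrix n n ℝ} (hdiag : ∀ i, A i i ≤ 0)
    (hdom : ∀ i, ∑ j ∈ univ.erase i, |A i j| < |A i i|) {Δt : ℝ} (hΔt : 0 < Δt) {μ : ℂ}
    (hμ : 1 ≤ ‖μ‖) : (gaussSeidelPencil A Δt μ).det ≠ 0 := by
  refine det_ne_zero_of_sum_row_lt_diag fun i => ?_
  have hscale : 0 < Δt * ‖μ‖ := by positivity
  calc ∑ j ∈ univ.erase i, ‖gaussSeidelPencil A Δt μ i j‖
      ≤ ∑ j ∈ univ.erase i, Δt * ‖μ‖ * |A i j| :=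
        sum_le_sum fun j hj => norm_gaussSeidelPencil_le hΔt.le hμ (ne_of_mem_erase hj).symm
    _ = Δt * ‖μ‖ * ∑ j ∈ univ.erase i, |A i j| := (mul_sum _ _ _).symm
    _ < Δt * ‖μ‖ * |A i i| := mul_lt_mul_of_pos_left (hdom i) hscale
    _ ≤ ‖gaussSeidelPencil A Δt μ i i‖ := le_norm_gaussSeidelPencil_diag hΔt.le hμ (hdiag i)

end GaussSeidel

theorem sdc1_spectral_radius_lt_one
    (n : ℕ) (A : Matrix (Fin n) (Fin n) ℝ)
    (hdiag : ∀ i, A i i < 0)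
    (hdom : ∀ i, ∑ j ∈ Finset.univ.filter (fun j => j ≠ i), |A i j| < |A i i|)
    (L D U : Matrix (Fin n) (Fin n) ℝ)
    (hL : ∀ i j, L i j = if (j : ℕ) < (i : ℕ) then A i j else 0)
    (hD : ∀ i j, D i j = if j = i then A i j else 0)
    (hU : ∀ i j, U i j = if (i : ℕ) < (j : ℕ) then A i j else 0)
    (Δt : ℝ) (hΔt : 0 < Δt) :
    ∀ μ ∈ spectrum ℂ
      (((((1 : Matrix (Fin n) (Fin n) ℝ) - Δt • L - Δt • D)⁻¹ *
        ((1 : Matrix (Fin n) (Fin n) ℝ) + Δt • U)).map (fun x : ℝ => (x : ℂ)))),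
      ‖μ‖ < 1 := by
  intro μ hμ
  by_contra! hμ_ge
  have hdiag_le : ∀ i, A i i ≤ 0 := fun i => (hdiag i).le
  have hsing := det_smul_map_sub_map_eq_zero_of_mem_spectrum Complex.ofRealHom
    (isUnit_det_one_sub_smul_sub_smul hdiag_le hL hD hΔt.le) hμ
  rw [smul_map_sub_map_eq_gaussSeidelPencil hL hD hU] at hsing
  exact det_gaussSeidelPencil_ne_zero hdiag_le (by simpa only [filter_ne'] using hdom) hΔt hμ_ge
    hsing
end

section
/- Let A be an n×n real matrix that is strictly diagonally dominant with negative diagonal entries, A = L + D + U (strict lower, diagonal, strict upper parts). If λ ∈ ℂ with |λ| ≥ 1 and x ∈ ℂⁿ is a nonzero vector with (I + Δt·U)x = λ(I − Δt·L − Δt·D)x for some Δt > 0, then choosing i with |x_i| maximal, we have 1 + Δt·Σ_{j>i}|a_ij|·|x_j|/|x_i| + Δt·|λ|·Σ_{j<i}|a_ij|·|x_j|/|x_i| ≥ |λ|·|1 − Δt·a_ii|, which leads to a contradiction; hence no eigenvalue of (I − Δt·L − Δt·D)^{-1}(I + Δt·U) has modulus ≥ 1. -/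
/-!
Pick `i` with `|x i|` maximal and read off row `i` of the eigen-equation:
`λ (1 - Δt a_ii) x_i = x_i + Δt (U x)_i + λ Δt (L x)_i`. Bounding `|x_j| ≤ |x_i|` and dividing by
`|x_i|` gives `|λ| (1 + Δt |a_ii|) ≤ 1 + Δt s_U + |λ| Δt s_L`, where `s_L + s_U < |a_ii|` are the
off-diagonal row sums; for `|λ| ≥ 1` the right side is at most `|λ| (1 + Δt (s_L + s_U))`, which is
too small.
-/

open Matrix

theorem map_ofReal_smul_mulVec {κ ι : Type*} [Fintype ι] (t : ℝ) (B : Matrix κ ι ℝ) (x : ι → ℂ) :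
    (t • B).map (↑) *ᵥ x = (t : ℂ) • (B.map (↑) *ᵥ x) := by
  rw [Matrix.map_smul _ _ (fun a => Complex.ofReal_mul t a), ← Complex.coe_smul, Matrix.smul_mulVec]

theorem norm_map_ofReal_mulVec_le {κ ι : Type*} [Fintype ι] (B : Matrix κ ι ℝ) {x : ι → ℂ}
    {r : ℝ} (hx : ∀ j, ‖x j‖ ≤ r) (i : κ) : ‖(B.map (↑) *ᵥ x) i‖ ≤ (∑ j, |B i j|) * r := by
  calc ‖(B.map (↑) *ᵥ x) i‖ ≤ ∑ j, ‖(B i j : ℂ) * x j‖ := norm_sum_le _ _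
    _ ≤ ∑ j, |B i j| * r := by
        gcongr with j
        rw [norm_mul, Complex.norm_real, Real.norm_eq_abs]
        gcongr
        exact hx j
    _ = (∑ j, |B i j|) * r := (Finset.sum_mul ..).symm

theorem exists_ne_zero_forall_norm_le {ι E : Type*} [Finite ι] [NormedAddCommGroup E]
    {x : ι → E} (hx : x ≠ 0) : ∃ i, x i ≠ 0 ∧ ∀ j, ‖x j‖ ≤ ‖x i‖ := by
  obtain ⟨k, hk⟩ := Function.ne_iff.1 hx
  have : Nonempty ι := ⟨k⟩
  obtain ⟨i, hi⟩ := Finite.exists_max fun j => ‖x j‖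
  refine ⟨i, fun h => hk ?_, hi⟩
  simpa [h] using hi k

theorem sum_abs_lower_add_sum_abs_upper {n : ℕ} {A L U : Matrix (Fin n) (Fin n) ℝ}
    (hL : ∀ i j, L i j = if (j : ℕ) < (i : ℕ) then A i j else 0)
    (hU : ∀ i j, U i j = if (i : ℕ) < (j : ℕ) then A i j else 0) (i : Fin n) :
    ∑ j, |L i j| + ∑ j, |U i j| = ∑ j ∈ Finset.univ.filter (· ≠ i), |A i j| := by
  rw [← Finset.sum_add_distrib, Finset.sum_filter]
  refine Finset.sum_congr rfl fun j _ => ?_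
  rw [hL, hU]
  rcases lt_trichotomy (j : ℕ) i with h | h | h
  · simp [h, h.not_gt, Fin.ne_of_lt h]
  · simp [Fin.ext h]
  · simp [h, h.not_gt, Fin.ne_of_gt h]

theorem norm_lt_one_of_row_eq {t a sl su : ℝ} {lam xi l u : ℂ} (ht : 0 < t) (ha : a < 0)
    (hs : sl + su < -a) (hxi : xi ≠ 0) (hl : ‖l‖ ≤ sl * ‖xi‖) (hu : ‖u‖ ≤ su * ‖xi‖)
    (h : xi + t * u = lam * (xi - t * l - t * (a * xi))) : ‖lam‖ < 1 := by
  have hxi' : 0 < ‖xi‖ := norm_pos_iff.2 hxi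
  have hsl : 0 ≤ sl := nonneg_of_mul_nonneg_left ((norm_nonneg l).trans hl) hxi'
  have hsu : 0 ≤ su := nonneg_of_mul_nonneg_left ((norm_nonneg u).trans hu) hxi'
  have hrow : lam * (1 - t * a) * xi = xi + t * u + lam * (t * l) := by linear_combination -h
  have hnorm : ‖(1 : ℂ) - t * a‖ = 1 - t * a := by
    rw [← Complex.ofReal_one, ← Complex.ofReal_mul, ← Complex.ofReal_sub, Complex.norm_real,
      Real.norm_of_nonneg (by nlinarith)]
  have hrow_norm : ‖lam‖ * (1 - t * a) * ‖xi‖ ≤ (1 + t * su + ‖lam‖ * (t * sl)) * ‖xi‖ :=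
    calc ‖lam‖ * (1 - t * a) * ‖xi‖ = ‖xi + t * u + lam * (t * l)‖ := by
          rw [← hrow, norm_mul, norm_mul, hnorm]
      _ ≤ ‖xi‖ + t * ‖u‖ + ‖lam‖ * (t * ‖l‖) := by
          refine (norm_add₃_le ..).trans_eq ?_
          rw [norm_mul, norm_mul, norm_mul, Complex.norm_real, Real.norm_of_nonneg ht.le]
      _ ≤ (1 + t * su + ‖lam‖ * (t * sl)) * ‖xi‖ := by
          nlinarith [norm_nonneg lam,
            mul_le_mul_of_nonneg_left hl (mul_nonneg (norm_nonneg lam) ht.le)]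
  have hineq := le_of_mul_le_mul_right hrow_norm hxi'
  by_contra! hlam
  have hgap : t * (sl + su) < t * -a := mul_lt_mul_of_pos_left hs ht
  nlinarith [mul_nonneg (sub_nonneg.2 hlam) (by nlinarith : 0 ≤ 1 - t * a - t * sl)]

theorem row_eq_of_eigen {n : ℕ} {A L D U : Matrix (Fin n) (Fin n) ℝ}
    (hD : ∀ i j, D i j = if j = i then A i j else 0) {t : ℝ} {lam : ℂ} {x : Fin n → ℂ}
    (heig : (((1 : Matrix (Fin n) (Fin n) ℝ) + t • U).map (fun a : ℝ => (a : ℂ))).mulVec x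
      = lam • ((((1 : Matrix (Fin n) (Fin n) ℝ) - t • L - t • D).map
          (fun a : ℝ => (a : ℂ))).mulVec x)) (i : Fin n) :
    x i + t * (U.map (↑) *ᵥ x) i = lam * (x i - t * (L.map (↑) *ᵥ x) i - t * (A i i * x i)) := by
  have hDx : (D.map (↑) *ᵥ x) i = A i i * x i := by
    simp [mulVec, dotProduct, hD, apply_ite]
  simpa [Matrix.map_add, Matrix.map_sub, Matrix.add_mulVec, Matrix.sub_mulVec,
    map_ofReal_smul_mulVec, hDx] using congrFun heig i

theorem sdc1_no_eigenvalue_of_modulus_ge_one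
    (n : ℕ) (A : Matrix (Fin n) (Fin n) ℝ)
    (hdiag : ∀ i, A i i < 0)
    (hdom : ∀ i, ∑ j ∈ Finset.univ.filter (fun j => j ≠ i), |A i j| < |A i i|)
    (L D U : Matrix (Fin n) (Fin n) ℝ)
    (hL : ∀ i j, L i j = if (j : ℕ) < (i : ℕ) then A i j else 0)
    (hD : ∀ i j, D i j = if j = i then A i j else 0)
    (hU : ∀ i j, U i j = if (i : ℕ) < (j : ℕ) then A i j else 0)
    (Δt : ℝ) (hΔt : 0 < Δt)
    (lam : ℂ) (hlam : 1 ≤ ‖lam‖)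
    (x : Fin n → ℂ) (hx : x ≠ 0)
    (heig : (((1 : Matrix (Fin n) (Fin n) ℝ) + Δt • U).map (fun a : ℝ => (a : ℂ))).mulVec x
      = lam • ((((1 : Matrix (Fin n) (Fin n) ℝ) - Δt • L - Δt • D).map
          (fun a : ℝ => (a : ℂ))).mulVec x)) :
    False := by
  obtain ⟨i, hxi, hmax⟩ := exists_ne_zero_forall_norm_le hx
  have hoff : ∑ j, |L i j| + ∑ j, |U i j| < -A i i := by
    rw [sum_abs_lower_add_sum_abs_upper hL hU, ← abs_of_neg (hdiag i)]
    exact hdom i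
  exact (norm_lt_one_of_row_eq hΔt (hdiag i) hoff hxi (norm_map_ofReal_mulVec_le L hmax i)
    (norm_map_ofReal_mulVec_le U hmax i) (row_eq_of_eigen hD heig i)).not_ge hlam
end

section
/- Let α > 0, Δt > 0. Any real root λ > 0 of the quadratic λ² − (1 + (1 − αΔt²)/(1 + Δt(α+1)))λ + 1/(1 + Δt(α+1)) = 0 satisfies λ < 1. -/
lemma lt_one_of_sub_one_mul_sub_neg {r x : ℝ} (hr : r ≤ 1) (h : (x - 1) * (x - r) < 0) :
    x < 1 := by
  by_contra! hx
  exact h.not_ge (mul_nonneg (sub_nonneg.2 hx) (sub_nonneg.2 (hr.trans hx)))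

lemma quadratic_eq_sub_one_mul_sub_add (a c x : ℝ) :
    x ^ 2 - (1 + (1 - a) / c) * x + 1 / c = (x - 1) * (x - 1 / c) + a / c * x := by
  ring

theorem sdc1_positive_real_root_lt_one
    (α Δt : ℝ) (hα : 0 < α) (hΔt : 0 < Δt)
    (lam : ℝ) (hpos : 0 < lam)
    (hroot : lam ^ 2 - (1 + (1 - α * Δt ^ 2) / (1 + Δt * (α + 1))) * lam
        + 1 / (1 + Δt * (α + 1)) = 0) :
    lam < 1 := by
  set c := 1 + Δt * (α + 1)
  have hc : 1 ≤ c := le_add_of_nonneg_right (by positivity)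
  rw [quadratic_eq_sub_one_mul_sub_add] at hroot
  have hprod : (lam - 1) * (lam - 1 / c) < 0 := by
    have : 0 < α * Δt ^ 2 / c * lam := by positivity
    linarith
  exact lt_one_of_sub_one_mul_sub_neg (div_le_one_of_le₀ hc (zero_le_one.trans hc)) hprod
end

section
/- For α > 0, both roots of the quadratic λ² − (1 + (1 − αΔt²)/(1 + Δt(α+1)))λ + 1/(1 + Δt(α+1)) = 0 have modulus at most 1 if and only if 0 < Δt ≤ (α + 1 + √((α+1)² + 4α))/α. -/
/-!
Write the quadratic as `p(λ) = λ² - bλ + c`. Here `c = 1 / (1 + Δt(α+1))` lies in `(0, 1)` and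
`p(1) = αΔt² / (1 + Δt(α+1)) ≥ 0`, so by the Jury criterion both roots lie in the closed unit disc
iff `p(-1) ≥ 0`: non-real roots are conjugate with modulus `√c`, and a real root can leave
`[-1, 1]` only where `p` changes sign at `±1`. Clearing the positive denominator, `p(-1) ≥ 0`
becomes `4 + 2(α+1)Δt - αΔt² ≥ 0`, whose positive root is the stated bound.
-/

theorem abs_le_one_of_quadratic_root {b c x : ℝ} (hc : |c| ≤ 1) (hp1 : 0 ≤ 1 - b + c)
    (hpm1 : 0 ≤ 1 + b + c) (hx : x ^ 2 - b * x + c = 0) : |x| ≤ 1 := by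
  -- `b - x` is the other root: `x (b - x) = c` and `(1 - x) (1 - (b - x)) = 1 - b + c`.
  have hprod : x * (b - x) = c := by linarith
  obtain ⟨hc₁, hc₂⟩ := abs_le.mp hc
  rw [abs_le]
  constructor <;> by_contra! h
  · nlinarith [mul_pos (neg_pos.mpr (show x + 1 < 0 by linarith)) (show 0 < -x by linarith)]
  · nlinarith

theorem norm_le_one_of_quadratic_root {b c : ℝ} (hc : |c| ≤ 1) (hp1 : 0 ≤ 1 - b + c)
    (hpm1 : 0 ≤ 1 + b + c) {z : ℂ} (hz : z ^ 2 - b * z + c = 0) : ‖z‖ ≤ 1 := by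
  have hre : z.re ^ 2 - z.im ^ 2 - b * z.re + c = 0 := by
    simpa [sq] using congrArg Complex.re hz
  have him : z.im * (2 * z.re - b) = 0 := by
    have := congrArg Complex.im hz
    simp only [sq, Complex.add_im, Complex.sub_im, Complex.mul_im, Complex.ofReal_re,
      Complex.ofReal_im, zero_mul, add_zero, Complex.zero_im] at this
    linarith
  rcases mul_eq_zero.mp him with him | hb
  · have hz_real : z = (z.re : ℂ) := Complex.ext rfl (by simpa using him)
    rw [hz_real, Complex.norm_real, Real.norm_eq_abs]
    exact abs_le_one_of_quadratic_root hc hp1 hpm1 (by rw [him] at hre; linarith)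
  · have hnormSq : Complex.normSq z = c := by
      rw [Complex.normSq_apply]; nlinarith
    rw [← sq_le_one_iff₀ (norm_nonneg z), ← Complex.normSq_eq_norm_sq, hnormSq]
    exact (abs_le.mp hc).2

theorem exists_quadratic_root_lt_neg_one {b c : ℝ} (hpm1 : 1 + b + c < 0) :
    ∃ x : ℝ, x < -1 ∧ x ^ 2 - b * x + c = 0 := by
  have hdisc : (b + 2) ^ 2 < b ^ 2 - 4 * c := by linarith
  set s := √(b ^ 2 - 4 * c)
  have hs_sq : s ^ 2 = b ^ 2 - 4 * c := Real.sq_sqrt ((sq_nonneg _).trans hdisc.le)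
  have hs_gt : b + 2 < s := Real.lt_sqrt_of_sq_lt hdisc
  exact ⟨(b - s) / 2, by linarith, by nlinarith⟩

theorem quadratic_roots_norm_le_one_iff {b c : ℝ} (hc : |c| ≤ 1) (hp1 : 0 ≤ 1 - b + c) :
    (∀ z : ℂ, z ^ 2 - b * z + c = 0 → ‖z‖ ≤ 1) ↔ 0 ≤ 1 + b + c := by
  refine ⟨fun h => ?_, fun hpm1 _ => norm_le_one_of_quadratic_root hc hp1 hpm1⟩
  by_contra! hpm1
  obtain ⟨x, hx, hroot⟩ := exists_quadratic_root_lt_neg_one hpm1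
  have hnorm := h x (by exact_mod_cast hroot)
  rw [Complex.norm_real, Real.norm_eq_abs] at hnorm
  linarith [neg_abs_le x]

theorem quadratic_nonneg_iff_le_root {a b c x : ℝ} (ha : 0 < a) (hc : 0 ≤ c) (hx : 0 ≤ x) :
    0 ≤ c + 2 * b * x - a * x ^ 2 ↔ x ≤ (b + √(b ^ 2 + c * a)) / a := by
  set s := √(b ^ 2 + c * a)
  have hs_sq : s ^ 2 = b ^ 2 + c * a := Real.sq_sqrt (by positivity)
  have hs_ge : b ≤ s := Real.le_sqrt_of_sq_le (by nlinarith)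
  have hfactor : a * (c + 2 * b * x - a * x ^ 2) = (b + s - a * x) * (a * x - b + s) := by
    linear_combination -hs_sq
  rw [le_div_iff₀ ha, ← mul_nonneg_iff_of_pos_left ha, hfactor]
  constructor
  · intro h
    by_contra! hlt
    have hs : 0 ≤ s := Real.sqrt_nonneg _
    nlinarith [mul_neg_of_neg_of_pos (sub_neg.mpr hlt) (show 0 < x * a - b + s by linarith)]
  · intro h
    exact mul_nonneg (by linarith) (by nlinarith)

theorem sdc1_stability_iff_time_step_bound
    (α Δt : ℝ) (hα : 0 < α) (hΔt : 0 < Δt) :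
    (∀ lam : ℂ,
        lam ^ 2 - ((1 : ℂ) + ((1 - α * Δt ^ 2) / (1 + Δt * (α + 1)) : ℝ)) * lam
          + ((1 / (1 + Δt * (α + 1)) : ℝ) : ℂ) = 0 → ‖lam‖ ≤ 1) ↔
      Δt ≤ (α + 1 + Real.sqrt ((α + 1) ^ 2 + 4 * α)) / α := by
  set D := 1 + Δt * (α + 1)
  have hD : 1 < D := by simp only [D]; nlinarith
  set b := 1 + (1 - α * Δt ^ 2) / D
  set c := 1 / D
  have hc : |c| ≤ 1 := by
    rw [abs_of_pos (by positivity)]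
    exact ((div_lt_one (by linarith)).mpr hD).le
  have hp1 : 1 - b + c = α * Δt ^ 2 / D := by simp only [b, c, D]; field_simp; ring
  have hpm1 : 1 + b + c = (4 + 2 * (α + 1) * Δt - α * Δt ^ 2) / D := by
    simp only [b, c, D]; field_simp; ring
  have hpoly : ∀ lam : ℂ, ((1 : ℂ) + ((1 - α * Δt ^ 2) / D : ℝ)) * lam = (b : ℂ) * lam := by
    intro lam; push_cast [b]; ring
  simp only [hpoly]
  rw [quadratic_roots_norm_le_one_iff hc (by rw [hp1]; positivity), hpm1,
    le_div_iff₀ (by linarith), zero_mul,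
    ← quadratic_nonneg_iff_le_root hα (by norm_num) hΔt.le]
end

section
/- For every α > 0, (α + 1 + √((α+1)² + 4α))/α > min{2/α, 2}, i.e., the maximum stable time step of the partitioned SDC1 scheme on the model problem u'=Au, A=[[0,1],[−α,−α−1]], strictly exceeds that of the monolithic forward Euler scheme. -/
theorem Real.lt_sqrt_sq_add {a b : ℝ} (ha : 0 ≤ a) (hb : 0 < b) : a < √(a ^ 2 + b) :=
  (Real.lt_sqrt ha).2 (lt_add_of_pos_right _ hb)

theorem sdc1_time_step_exceeds_forward_euler (α : ℝ) (hα : 0 < α) :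
    min (2 / α) 2 < (α + 1 + Real.sqrt ((α + 1) ^ 2 + 4 * α)) / α := by
  have hsqrt : α + 1 < √((α + 1) ^ 2 + 4 * α) := Real.lt_sqrt_sq_add (by linarith) (by linarith)
  calc min (2 / α) 2 ≤ 2 / α := min_le_left _ _
    _ < 2 / α + 2 := by linarith
    _ = (α + 1 + (α + 1)) / α := by field_simp; ring
    _ < (α + 1 + √((α + 1) ^ 2 + 4 * α)) / α := by gcongr
end

section
/- Let A be an n×n complex matrix that is irreducibly diagonally dominant with non-positive diagonal entries, decomposed A = L + D + U into strict lower, diagonal, and strict upper parts. Then for every Δt > 0 and every complex number λ with |λ| ≥ 1, the matrix λ(I − Δt·L − Δt·D) − (I + Δt·U) is invertible; consequently the spectral radius of C = (I − Δt·L − Δt·D)^{-1}(I + Δt·U) is strictly less than 1. -/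
/-!
Write `B = I - Δt L - Δt D`, `V = I + Δt U` and `M = λ B - V` with `‖λ‖ ≥ 1`. Off the diagonal
`M` has the entries `-λ Δt aᵢⱼ` (below) and `-Δt aᵢⱼ` (above): their moduli lie between
`Δt ‖aᵢⱼ‖` and `‖λ‖ Δt ‖aᵢⱼ‖`. Since `aᵢᵢ ≤ 0`, the diagonal entry is `λ (1 + Δt ‖aᵢᵢ‖) - 1`, of
modulus at least `‖λ‖ Δt ‖aᵢᵢ‖`. So `M` has the same directed graph as `A` (up to loops) and
dominates `‖λ‖ Δt A` row by row, hence is again irreducibly diagonally dominant.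

Such a matrix is nonsingular (Taussky): at a coordinate of maximal modulus of a null vector `x`,
the row equation together with weak dominance forces all neighbours to have maximal modulus too,
so by irreducibility `x` attains its maximum at a strictly dominant row, which is absurd.
Finally `B` is lower triangular with diagonal `1 + Δt ‖aᵢᵢ‖ ≠ 0`, and `μ` is an eigenvalue of
`B⁻¹ V` exactly when `μ B - V` is singular.
-/

open Finset

namespace Matrix

variable {ι 𝕜 : Type*} [Fintype ι] [DecidableEq ι] [NormedField 𝕜]
  {M : Matrix ι ι 𝕜} {x : ι → 𝕜} {i j : ι}

theorem norm_apply_self_mul_le_of_mulVec_eq_zero (hx : M *ᵥ x = 0) (i : ι) :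
    ‖M i i‖ * ‖x i‖ ≤ ∑ j ∈ univ.erase i, ‖M i j‖ * ‖x j‖ := by
  have hrow : M i i * x i = -∑ j ∈ univ.erase i, M i j * x j := by
    have hi := congrFun hx i
    rw [mulVec, dotProduct, ← add_sum_erase _ _ (mem_univ i)] at hi
    exact eq_neg_of_add_eq_zero_left hi
  calc ‖M i i‖ * ‖x i‖ = ‖∑ j ∈ univ.erase i, M i j * x j‖ := by
        rw [← norm_mul, hrow, norm_neg]
    _ ≤ ∑ j ∈ univ.erase i, ‖M i j‖ * ‖x j‖ := (norm_sum_le _ _).trans_eq (by simp only [norm_mul])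

theorem norm_apply_self_le_sum_of_mulVec_eq_zero (hx : M *ᵥ x = 0)
    (hmax : ∀ j, ‖x j‖ ≤ ‖x i‖) (hi : x i ≠ 0) :
    ‖M i i‖ ≤ ∑ j ∈ univ.erase i, ‖M i j‖ := by
  refine le_of_mul_le_mul_right ?_ (norm_pos_iff.2 hi)
  calc ‖M i i‖ * ‖x i‖ ≤ ∑ j ∈ univ.erase i, ‖M i j‖ * ‖x j‖ :=
        norm_apply_self_mul_le_of_mulVec_eq_zero hx i
    _ ≤ ∑ j ∈ univ.erase i, ‖M i j‖ * ‖x i‖ :=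
        sum_le_sum fun j _ => mul_le_mul_of_nonneg_left (hmax j) (norm_nonneg _)
    _ = (∑ j ∈ univ.erase i, ‖M i j‖) * ‖x i‖ := (sum_mul ..).symm

theorem norm_apply_eq_of_mulVec_eq_zero (hx : M *ᵥ x = 0)
    (hdom : ∑ k ∈ univ.erase i, ‖M i k‖ ≤ ‖M i i‖) (hmax : ∀ k, ‖x k‖ ≤ ‖x i‖)
    (hij : M i j ≠ 0) : ‖x j‖ = ‖x i‖ := by
  by_contra hne
  have hji : j ≠ i := by rintro rfl; exact hne rfl
  have hlt : ∑ k ∈ univ.erase i, ‖M i k‖ * ‖x k‖ < (∑ k ∈ univ.erase i, ‖M i k‖) * ‖x i‖ := by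
    rw [sum_mul]
    exact sum_lt_sum (fun k _ => mul_le_mul_of_nonneg_left (hmax k) (norm_nonneg _))
      ⟨j, mem_erase.2 ⟨hji, mem_univ j⟩,
        mul_lt_mul_of_pos_left ((hmax j).lt_of_ne hne) (norm_pos_iff.2 hij)⟩
  have := norm_apply_self_mul_le_of_mulVec_eq_zero hx i
  nlinarith [mul_le_mul_of_nonneg_right hdom (norm_nonneg (x i))]

theorem det_ne_zero_of_weakly_chained_diag_dominant
    (hdom : ∀ i, ∑ j ∈ univ.erase i, ‖M i j‖ ≤ ‖M i i‖) {i₀ : ι}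
    (hstrict : ∑ j ∈ univ.erase i₀, ‖M i₀ j‖ < ‖M i₀ i₀‖)
    (hchain : ∀ i, Relation.ReflTransGen (fun a b => M a b ≠ 0) i i₀) : M.det ≠ 0 := by
  intro hdet
  obtain ⟨x, hx0, hx⟩ := exists_mulVec_eq_zero_iff.2 hdet
  obtain ⟨i₁, -, hi₁⟩ := univ.exists_max_image (fun i => ‖x i‖) ⟨i₀, mem_univ _⟩
  have hmax : ∀ i, ‖x i‖ = ‖x i₁‖ → ∀ k, ‖x k‖ ≤ ‖x i‖ := fun i hi k => hi ▸ hi₁ k (mem_univ k)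
  have hspread : ∀ i, Relation.ReflTransGen (fun a b => M a b ≠ 0) i₁ i → ‖x i‖ = ‖x i₁‖ := by
    intro i hi
    induction hi with
    | refl => rfl
    | tail _ hab ih => exact (norm_apply_eq_of_mulVec_eq_zero hx (hdom _) (hmax _ ih) hab).trans ih
  have hi₀ := hspread i₀ (hchain i₁)
  have hx₀ : x i₀ ≠ 0 := by
    obtain ⟨k, hk⟩ := Function.ne_iff.1 hx0
    exact norm_pos_iff.1 (hi₀ ▸ (norm_pos_iff.2 hk).trans_le (hi₁ k (mem_univ k)))
  exact (norm_apply_self_le_sum_of_mulVec_eq_zero hx (hmax _ hi₀) hx₀).not_gt hstrict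

theorem mem_spectrum_inv_mul_iff {K : Type*} [Field K] {B V : Matrix ι ι K} (hB : IsUnit B)
    {μ : K} : μ ∈ spectrum K (B⁻¹ * V) ↔ ¬IsUnit (μ • B - V) := by
  have hBV : algebraMap K (Matrix ι ι K) μ - B⁻¹ * V = B⁻¹ * (μ • B - V) := by
    rw [Matrix.mul_sub, Matrix.mul_smul, nonsing_inv_mul B ((isUnit_iff_isUnit_det B).1 hB),
      Algebra.algebraMap_eq_smul_one]
  rw [spectrum.mem_iff, hBV, IsUnit.mul_left_iff (isUnit_nonsing_inv_iff.2 hB)]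

end Matrix

open scoped ComplexOrder in
theorem Complex.one_sub_ofReal_mul_eq_of_nonpos {z : ℂ} (hz : z ≤ 0) (t : ℝ) :
    1 - (t : ℂ) * z = ((1 + t * ‖z‖ : ℝ) : ℂ) := by
  have hnorm := eq_coe_norm_of_nonneg (neg_nonneg.2 hz)
  rw [norm_neg] at hnorm
  push_cast
  linear_combination (t : ℂ) * hnorm

structure Matrix.IsLDUSplitting {ι R : Type*} [LinearOrder ι] [Zero R]
    (A L D U : Matrix ι ι R) : Prop where
  lower : ∀ i j, L i j = if j < i then A i j else 0
  diag : ∀ i j, D i j = if j = i then A i j else 0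
  upper : ∀ i j, U i j = if i < j then A i j else 0

section Splitting

open scoped ComplexOrder

variable {ι : Type*} [LinearOrder ι]

def implicitPart (Δt : ℝ) (L D : Matrix ι ι ℂ) : Matrix ι ι ℂ :=
  1 - (Δt : ℂ) • L - (Δt : ℂ) • D

def explicitPart (Δt : ℝ) (U : Matrix ι ι ℂ) : Matrix ι ι ℂ :=
  1 + (Δt : ℂ) • U

variable {A L D U : Matrix ι ι ℂ} {Δt : ℝ} {lam : ℂ} {i j : ι}

theorem implicitPart_apply_of_lt (h : A.IsLDUSplitting L D U) (hij : i < j) :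
    implicitPart Δt L D i j = 0 := by
  simp [implicitPart, h.lower, h.diag, hij.ne, hij.not_gt, hij.ne']

theorem implicitPart_apply_self (h : A.IsLDUSplitting L D U) :
    implicitPart Δt L D i i = 1 - Δt * A i i := by
  simp [implicitPart, h.lower, h.diag]

theorem pencil_apply_of_lt (h : A.IsLDUSplitting L D U) (hji : j < i) :
    (lam • implicitPart Δt L D - explicitPart Δt U) i j = -(lam * Δt * A i j) := by
  simp [implicitPart, explicitPart, h.lower, h.diag, h.upper, hji, hji.ne, hji.not_gt, hji.ne']
  ring

theorem pencil_apply_of_gt (h : A.IsLDUSplitting L D U) (hij : i < j) :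
    (lam • implicitPart Δt L D - explicitPart Δt U) i j = -(Δt * A i j) := by
  simp [implicitPart, explicitPart, h.lower, h.diag, h.upper, hij, hij.ne, hij.not_gt, hij.ne']

theorem pencil_apply_self (h : A.IsLDUSplitting L D U) :
    (lam • implicitPart Δt L D - explicitPart Δt U) i i = lam * (1 - Δt * A i i) - 1 := by
  simp [implicitPart, explicitPart, h.lower, h.diag, h.upper]

theorem norm_pencil_apply_le (h : A.IsLDUSplitting L D U) (hΔt : 0 ≤ Δt) (hlam : 1 ≤ ‖lam‖)
    (hij : j ≠ i) :
    ‖(lam • implicitPart Δt L D - explicitPart Δt U) i j‖ ≤ ‖lam‖ * Δt * ‖A i j‖ := by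
  rcases hij.lt_or_gt with hji | hij
  · simp [pencil_apply_of_lt h hji, abs_of_nonneg hΔt]
  · rw [pencil_apply_of_gt h hij, norm_neg, norm_mul, Complex.norm_of_nonneg hΔt]
    exact mul_le_mul_of_nonneg_right (le_mul_of_one_le_left hΔt hlam) (norm_nonneg _)

theorem mul_norm_le_norm_pencil_apply_self (h : A.IsLDUSplitting L D U) (hdiag : A i i ≤ 0)
    (hΔt : 0 ≤ Δt) (hlam : 1 ≤ ‖lam‖) :
    ‖lam‖ * Δt * ‖A i i‖ ≤ ‖(lam • implicitPart Δt L D - explicitPart Δt U) i i‖ := by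
  rw [pencil_apply_self h, Complex.one_sub_ofReal_mul_eq_of_nonpos hdiag]
  have := norm_sub_norm_le (lam * ((1 + Δt * ‖A i i‖ : ℝ) : ℂ)) 1
  rw [norm_mul, Complex.norm_of_nonneg (by positivity), norm_one] at this
  nlinarith

theorem mul_norm_le_norm_pencil_apply (h : A.IsLDUSplitting L D U) (hdiag : A i i ≤ 0)
    (hΔt : 0 ≤ Δt) (hlam : 1 ≤ ‖lam‖) :
    Δt * ‖A i j‖ ≤ ‖(lam • implicitPart Δt L D - explicitPart Δt U) i j‖ := by
  rcases lt_trichotomy j i with hji | rfl | hij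
  · rw [pencil_apply_of_lt h hji, norm_neg, norm_mul, norm_mul, Complex.norm_of_nonneg hΔt,
      mul_assoc]
    exact le_mul_of_one_le_left (by positivity) hlam
  · refine le_trans ?_ (mul_norm_le_norm_pencil_apply_self h hdiag hΔt hlam)
    rw [mul_assoc]
    exact le_mul_of_one_le_left (by positivity) hlam
  · simp [pencil_apply_of_gt h hij, abs_of_nonneg hΔt]

end Splitting

section Stability

open scoped ComplexOrder

variable {ι : Type*} [Fintype ι] [LinearOrder ι] {A L D U : Matrix ι ι ℂ} {Δt : ℝ}

theorem isUnit_implicitPart (h : A.IsLDUSplitting L D U) (hdiag : ∀ i, A i i ≤ 0)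
    (hΔt : 0 ≤ Δt) : IsUnit (implicitPart Δt L D) := by
  rw [Matrix.isUnit_iff_isUnit_det, Matrix.det_of_isLowerTriangular (implicitPart Δt L D)
    fun i j hij => implicitPart_apply_of_lt h hij, isUnit_iff_ne_zero, prod_ne_zero_iff]
  intro i _
  rw [implicitPart_apply_self h, Complex.one_sub_ofReal_mul_eq_of_nonpos (hdiag i),
    Complex.ofReal_ne_zero]
  positivity

theorem isUnit_pencil_of_irreducibly_diag_dominant (h : A.IsLDUSplitting L D U)
    (hdiag : ∀ i, A i i ≤ 0) (hdom : ∀ i, ∑ j ∈ univ.erase i, ‖A i j‖ ≤ ‖A i i‖)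
    (hstrict : ∃ i, ∑ j ∈ univ.erase i, ‖A i j‖ < ‖A i i‖)
    (hirr : ∀ i j, Relation.TransGen (fun a b => A a b ≠ 0) i j) (hΔt : 0 < Δt) {lam : ℂ}
    (hlam : 1 ≤ ‖lam‖) : IsUnit (lam • implicitPart Δt L D - explicitPart Δt U) := by
  set M := lam • implicitPart Δt L D - explicitPart Δt U
  obtain ⟨i₀, hi₀⟩ := hstrict
  have hc : 0 < ‖lam‖ * Δt := mul_pos (one_pos.trans_le hlam) hΔt
  have hrow : ∀ i, ∑ j ∈ univ.erase i, ‖M i j‖ ≤ ‖lam‖ * Δt * ∑ j ∈ univ.erase i, ‖A i j‖ := by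
    intro i
    rw [mul_sum]
    exact sum_le_sum fun j hj => norm_pencil_apply_le h hΔt.le hlam (ne_of_mem_erase hj)
  have hsupp : ∀ a b, A a b ≠ 0 → M a b ≠ 0 := fun a b hab =>
    norm_pos_iff.1 <| (mul_pos hΔt (norm_pos_iff.2 hab)).trans_le
      (mul_norm_le_norm_pencil_apply h (hdiag a) hΔt.le hlam)
  refine (M.isUnit_iff_isUnit_det).2 <| isUnit_iff_ne_zero.2 <|
    M.det_ne_zero_of_weakly_chained_diag_dominant (i₀ := i₀) (fun i => ?_) ?_
      fun i => (Relation.TransGen.mono hsupp _ _ (hirr i i₀)).to_reflTransGen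
  · calc ∑ j ∈ univ.erase i, ‖M i j‖ ≤ ‖lam‖ * Δt * ∑ j ∈ univ.erase i, ‖A i j‖ := hrow i
      _ ≤ ‖lam‖ * Δt * ‖A i i‖ := mul_le_mul_of_nonneg_left (hdom i) hc.le
      _ ≤ ‖M i i‖ := mul_norm_le_norm_pencil_apply_self h (hdiag i) hΔt.le hlam
  · calc ∑ j ∈ univ.erase i₀, ‖M i₀ j‖ ≤ ‖lam‖ * Δt * ∑ j ∈ univ.erase i₀, ‖A i₀ j‖ := hrow i₀
      _ < ‖lam‖ * Δt * ‖A i₀ i₀‖ := mul_lt_mul_of_pos_left hi₀ hc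
      _ ≤ ‖M i₀ i₀‖ := mul_norm_le_norm_pencil_apply_self h (hdiag i₀) hΔt.le hlam

end Stability

theorem sdc1_irreducibly_diagonally_dominant_stability
    (n : ℕ) (A : Matrix (Fin n) (Fin n) ℂ)
    (hdiag : ∀ i, (A i i).re ≤ 0 ∧ (A i i).im = 0)
    (hdom : ∀ i, ∑ j ∈ Finset.univ.filter (fun j => j ≠ i), ‖A i j‖ ≤ ‖A i i‖)
    (hstrict : ∃ i, ∑ j ∈ Finset.univ.filter (fun j => j ≠ i), ‖A i j‖ < ‖A i i‖)
    (hirr : ∀ i j : Fin n, Relation.TransGen (fun a b : Fin n => A a b ≠ 0) i j)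
    (L D U : Matrix (Fin n) (Fin n) ℂ)
    (hL : ∀ i j, L i j = if (j : ℕ) < (i : ℕ) then A i j else 0)
    (hD : ∀ i j, D i j = if j = i then A i j else 0)
    (hU : ∀ i j, U i j = if (i : ℕ) < (j : ℕ) then A i j else 0)
    (Δt : ℝ) (hΔt : 0 < Δt) :
    (∀ lam : ℂ, 1 ≤ ‖lam‖ →
      IsUnit (lam • ((1 : Matrix (Fin n) (Fin n) ℂ) - (Δt : ℂ) • L - (Δt : ℂ) • D)
        - ((1 : Matrix (Fin n) (Fin n) ℂ) + (Δt : ℂ) • U))) ∧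
    (∀ μ ∈ spectrum ℂ
        (((1 : Matrix (Fin n) (Fin n) ℂ) - (Δt : ℂ) • L - (Δt : ℂ) • D)⁻¹ *
          ((1 : Matrix (Fin n) (Fin n) ℂ) + (Δt : ℂ) • U)),
      ‖μ‖ < 1) := by
  have hsplit : A.IsLDUSplitting L D U := ⟨hL, hD, hU⟩
  open scoped ComplexOrder in
  have hnonpos : ∀ i, A i i ≤ 0 := fun i => Complex.nonpos_iff.2 (hdiag i)
  simp only [filter_ne'] at hdom hstrict
  have hpencil : ∀ lam : ℂ, 1 ≤ ‖lam‖ → IsUnit (lam • implicitPart Δt L D - explicitPart Δt U) :=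
    fun lam => isUnit_pencil_of_irreducibly_diag_dominant hsplit hnonpos hdom hstrict hirr hΔt
  refine ⟨hpencil, fun μ hμ => ?_⟩
  by_contra! hμ₁
  exact (Matrix.mem_spectrum_inv_mul_iff (isUnit_implicitPart hsplit hnonpos hΔt.le)).1 hμ
    (hpencil μ hμ₁)
end
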